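/- arXiv:2201.12953 — 2 statements merged into one kernel-verified Lean document; each statement's English description precedes it below -/
import Mathlib

section
/- (Formula for v-adic multiple zeta values at negative integers in terms of ∞-adic ones.) Let r ≥ 1 and m_1,…,m_r ∈ ℤ_{≥0}. Then in A: ζ_v(−m_1,…,−m_r) = Σ_{l=0}^{r} (−1)^l · ζ_{<d}(−m_{l+1},…,−m_r) · [ Σ_{(a_1,…,a_l)} v^{a_1+⋯+a_l} · ζ_{<d}(−(m_1−a_1)) ⋯ ζ_{<d}(−(m_l−a_l)) · C(m_1,a_1) ⋯ C(m_l,a_l) · ζ_∞(−a_1,…,−a_l) ], where the inner sum runs over all integer tuples (a_1,…,a_l) with 0 ≤ a_j ≤ m_j and (q−1) | (m_j − a_j) for all 1 ≤ j ≤ l, and the l = 0 summand is ζ_{<d}(−m_1,…,−m_r). -/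
/-!
Write a monic `n` of degree `i + d` (where `d = deg v`) uniquely as `n = v g + h` with `g` monic
of degree `i` and `deg h < d`; then `v ∣ n` iff `h = 0`. Expanding `(v g + h) ^ m` binomially and
summing `h ^ k` over the nonzero `h` of degree `< d`, grouped by leading coefficient (the sum of
`c ^ k` over `c ∈ 𝔽_q^×` is `-1` if `q - 1 ∣ k` and `0` otherwise), gives
`S̃_{i+d}(-m) = -∑_{a ≤ m, q - 1 ∣ m - a} v^a ζ_{<d}(-(m - a)) C(m, a) S_i(-a)`,
while `S̃_i = S_i` for `i < d`. In `ζ_v(-m_1, …, -m_r)`, split each strictly decreasing index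
tuple after its `l` entries that are `≥ d`: the remaining entries give
`ζ_{<d}(-m_{l+1}, …, -m_r)`, and substituting the formula into the first `l` factors and summing
over the shifted indices `i_j - d` produces `(-1)^l` times the sum of the `ζ_∞(-a_1, …, -a_l)`.
-/

open Polynomial

/-- The power sum `S_i(-m)`: the sum of `n ^ m` over monic polynomials `n` of degree `i`. -/
noncomputable def powerSum (F : Type*) [Field F] [Fintype F] (i m : ℕ) : Polynomial F :=
  ∑ᶠ n ∈ {n : Polynomial F | n.Monic ∧ n.natDegree = i}, n ^ m

/-- The restricted power sum `S̃_i(-m)`: the sum of `n ^ m` over monic polynomials `n` of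
degree `i` not divisible by `v`. -/
noncomputable def powerSumV (F : Type*) [Field F] [Fintype F] (v : Polynomial F) (i m : ℕ) :
    Polynomial F :=
  ∑ᶠ n ∈ {n : Polynomial F | n.Monic ∧ n.natDegree = i ∧ ¬ v ∣ n}, n ^ m

/-- `ζ_∞(-m_1, …, -m_r)`, the ∞-adic multiple zeta value at nonpositive integers:
the sum over `i_1 > ⋯ > i_r ≥ 0` of `S_{i_1}(-m_1) ⋯ S_{i_r}(-m_r)`.
Only `m 0, …, m (r-1)` are used.  The depth-0 value is `1`. -/
noncomputable def zetaInf (F : Type*) [Field F] [Fintype F] (r : ℕ) (m : ℕ → ℕ) :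
    Polynomial F :=
  ∑ᶠ i ∈ {i : Fin r → ℕ | StrictAnti i}, ∏ j : Fin r, powerSum F (i j) (m (j : ℕ))

/-- `ζ⋆_∞(-m_1, …, -m_r)`, the ∞-adic multiple zeta star value at nonpositive integers:
the sum over `i_1 ≥ ⋯ ≥ i_r ≥ 0` of `S_{i_1}(-m_1) ⋯ S_{i_r}(-m_r)`. -/
noncomputable def zetaInfStar (F : Type*) [Field F] [Fintype F] (r : ℕ) (m : ℕ → ℕ) :
    Polynomial F :=
  ∑ᶠ i ∈ {i : Fin r → ℕ | Antitone i}, ∏ j : Fin r, powerSum F (i j) (m (j : ℕ))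

/-- `ζ_v(-m_1, …, -m_r)`, the v-adic multiple zeta value at nonpositive integers. -/
noncomputable def zetaV (F : Type*) [Field F] [Fintype F] (v : Polynomial F) (r : ℕ)
    (m : ℕ → ℕ) : Polynomial F :=
  ∑ᶠ i ∈ {i : Fin r → ℕ | StrictAnti i}, ∏ j : Fin r, powerSumV F v (i j) (m (j : ℕ))

/-- `ζ⋆_v(-m_1, …, -m_r)`, the v-adic multiple zeta star value at nonpositive integers. -/
noncomputable def zetaVStar (F : Type*) [Field F] [Fintype F] (v : Polynomial F) (r : ℕ)
    (m : ℕ → ℕ) : Polynomial F :=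
  ∑ᶠ i ∈ {i : Fin r → ℕ | Antitone i}, ∏ j : Fin r, powerSumV F v (i j) (m (j : ℕ))

/-- `ζ_{<d}(-m_1, …, -m_r)`, the truncated multiple zeta value:
the sum over `d > i_1 > ⋯ > i_r ≥ 0` of `S_{i_1}(-m_1) ⋯ S_{i_r}(-m_r)`. -/
noncomputable def zetaLt (F : Type*) [Field F] [Fintype F] (d r : ℕ) (m : ℕ → ℕ) :
    Polynomial F :=
  ∑ᶠ i ∈ {i : Fin r → ℕ | StrictAnti i ∧ ∀ j, i j < d},
    ∏ j : Fin r, powerSum F (i j) (m (j : ℕ))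

/-- `ζ⋆_{<d}(-m_1, …, -m_r)`, the truncated multiple zeta star value. -/
noncomputable def zetaLtStar (F : Type*) [Field F] [Fintype F] (d r : ℕ) (m : ℕ → ℕ) :
    Polynomial F :=
  ∑ᶠ i ∈ {i : Fin r → ℕ | Antitone i ∧ ∀ j, i j < d},
    ∏ j : Fin r, powerSum F (i j) (m (j : ℕ))

/-- `ζ_{<d}(-m)`, the depth-one truncated zeta value `Σ_{d > i ≥ 0} S_i(-m)`. -/
noncomputable def zetaLtOne (F : Type*) [Field F] [Fintype F] (d m : ℕ) : Polynomial F :=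
  ∑ᶠ i ∈ {i : ℕ | i < d}, powerSum F i m

open Finset

namespace Polynomial

section DegreeLT

variable (R : Type*) [Semiring R] [Fintype R]

theorem finite_degreeLT (e : ℕ) : (degreeLT R e : Set R[X]).Finite :=
  Set.finite_coe_iff.mp (.of_equiv _ (degreeLTEquiv R e).toEquiv.symm)

noncomputable def degreeLTFinset (e : ℕ) : Finset R[X] :=
  (finite_degreeLT R e).toFinset

noncomputable def monicOfDegree (i : ℕ) : Finset R[X] := by
  classical exact {n ∈ degreeLTFinset R (i + 1) | n.Monic ∧ n.natDegree = i}

variable {R}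

@[simp]
theorem mem_degreeLTFinset {e : ℕ} {p : R[X]} : p ∈ degreeLTFinset R e ↔ p.degree < e := by
  simp [degreeLTFinset, mem_degreeLT]

@[simp]
theorem mem_monicOfDegree [Nontrivial R] {i : ℕ} {n : R[X]} :
    n ∈ monicOfDegree R i ↔ n.Monic ∧ n.natDegree = i := by
  simp only [monicOfDegree, mem_filter, mem_degreeLTFinset, and_iff_right_iff_imp]
  rintro ⟨hn, rfl⟩
  rw [degree_eq_natDegree hn.ne_zero]
  exact_mod_cast n.natDegree.lt_succ_self

theorem card_degreeLTFinset (e : ℕ) : #(degreeLTFinset R e) = Fintype.card R ^ e := by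
  rw [degreeLTFinset, ← Nat.card_eq_card_finite_toFinset, SetLike.coe_sort_coe,
    Nat.card_congr (degreeLTEquiv R e).toEquiv, Nat.card_fun, Nat.card_eq_fintype_card,
    Nat.card_fin]

end DegreeLT

theorem sum_monicOfDegree_add_natDegree {R M : Type*} [CommRing R] [Nontrivial R] [Fintype R]
    [AddCommMonoid M] {w : R[X]} (hw : w.Monic) (i : ℕ) (f : R[X] → M) :
    ∑ n ∈ monicOfDegree R (i + w.natDegree), f n =
      ∑ g ∈ monicOfDegree R i, ∑ h ∈ degreeLTFinset R w.natDegree, f (w * g + h) := by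
  rw [← sum_product']
  have hw' : w.degree = w.natDegree := degree_eq_natDegree hw.ne_zero
  refine sum_nbij' (fun n => (n /ₘ w, n %ₘ w)) (fun p => w * p.1 + p.2) ?_ ?_ ?_ ?_ ?_
  · simp only [mem_monicOfDegree, mem_product, mem_degreeLTFinset]
    rintro n ⟨hn, hdeg⟩
    refine ⟨⟨?_, ?_⟩, hw' ▸ degree_modByMonic_lt n hw⟩
    · refine (leadingCoeff_divByMonic_of_monic hw ?_).trans hn.leadingCoeff
      rw [hw', degree_eq_natDegree hn.ne_zero, hdeg]
      exact_mod_cast Nat.le_add_left _ _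
    · rw [natDegree_divByMonic _ hw, hdeg, Nat.add_sub_cancel]
  · simp only [mem_monicOfDegree, mem_product, mem_degreeLTFinset]
    rintro ⟨g, h⟩ ⟨⟨hg, rfl⟩, hh⟩
    have hwg : (w * g).natDegree = g.natDegree + w.natDegree := by
      rw [hw.natDegree_mul hg, add_comm]
    have hlt : h.degree < (w * g).degree := by
      rw [degree_eq_natDegree (hw.mul hg).ne_zero, hwg]
      exact hh.trans_le (by exact_mod_cast Nat.le_add_left _ _)
    exact ⟨(hw.mul hg).add_of_left hlt, by rw [natDegree_add_eq_left_of_degree_lt hlt, hwg]⟩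
  · intro n _
    exact (add_comm _ _).trans (modByMonic_add_div n w)
  · simp only [mem_monicOfDegree, mem_product, mem_degreeLTFinset]
    rintro ⟨g, h⟩ ⟨-, hh⟩
    obtain ⟨hdiv, hmod⟩ := div_modByMonic_unique g h hw ⟨add_comm _ _, hw' ▸ hh⟩
    rw [hdiv, hmod]
  · intro n _
    rw [add_comm, modByMonic_add_div n w]

end Polynomial

theorem Fin.strictAnti_append {α : Type*} [Preorder α] {l k : ℕ} {u : Fin l → α}
    {y : Fin k → α} (hu : StrictAnti u) (hy : StrictAnti y) (huy : ∀ i j, y j < u i) :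
    StrictAnti (Fin.append u y) := by
  intro a b hab
  induction a using Fin.addCases <;> induction b using Fin.addCases <;>
    simp only [Fin.append_left, Fin.append_right] <;> rw [Fin.lt_def] at hab <;>
    simp only [Fin.val_castAdd, Fin.val_natAdd] at hab
  · exact hu (Fin.lt_def.2 hab)
  · exact huy _ _
  · omega
  · exact hy (Fin.lt_def.2 (by omega))

theorem Antitone.lt_card_filter_le_iff {α : Type*} [LinearOrder α] {r : ℕ} {x : Fin r → α}
    (hx : Antitone x) (d : α) (j : Fin r) : (j : ℕ) < #{k | d ≤ x k} ↔ d ≤ x j := by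
  constructor
  · intro hj
    by_contra! hxj
    have hsub : ({k | d ≤ x k} : Finset (Fin r)) ⊆ Iio j := fun k hk => by
      simp only [mem_filter, mem_univ, true_and, mem_Iio] at hk ⊢
      by_contra! hjk
      exact (hx hjk).not_gt (hxj.trans_le hk)
    have := card_le_card hsub
    rw [Fin.card_Iio] at this
    omega
  · intro hxj
    have hsub : Iic j ⊆ ({k | d ≤ x k} : Finset (Fin r)) := fun k hk => by
      simp only [mem_filter, mem_univ, true_and, mem_Iic] at hk ⊢
      exact hxj.trans (hx hk)
    have := card_le_card hsub
    rw [Fin.card_Iic] at this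
    omega

theorem Antitone.card_filter_le_eq_iff {α : Type*} [LinearOrder α] {l k : ℕ}
    {x : Fin (l + k) → α} (hx : Antitone x) (d : α) :
    #{j | d ≤ x j} = l ↔
      (∀ j, d ≤ x (Fin.castAdd k j)) ∧ ∀ j, x (Fin.natAdd l j) < d := by
  constructor
  · intro hcard
    have hiff := hcard ▸ hx.lt_card_filter_le_iff d
    exact ⟨fun j => (hiff _).1 j.isLt, fun j => not_le.1 fun h => by simpa using (hiff _).2 h⟩
  · rintro ⟨hleft, hright⟩
    rw [card_filter, Fin.sum_univ_add]
    simp [hleft, hright]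

theorem Fin.extend_val_zero_apply {α : Type*} [Zero α] {l : ℕ} (p : Fin l → α) (j : ℕ) :
    Function.extend Fin.val p 0 j = if h : j < l then p ⟨j, h⟩ else 0 := by
  split_ifs with h
  · exact Fin.val_injective.extend_apply p 0 ⟨j, h⟩
  · exact Function.extend_apply' _ _ _ fun ⟨i, hi⟩ => h (hi ▸ i.isLt)

theorem finsum_eq_sum_piFinset_extend {α M : Type*} [Zero α] [AddCommMonoid M] {l : ℕ}
    {P : ℕ → α → Prop} {s : ℕ → Finset α} (hs : ∀ j b, b ∈ s j ↔ P j b)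
    (f : (ℕ → α) → M) :
    ∑ᶠ a ∈ {a : ℕ → α | (∀ j < l, P j (a j)) ∧ ∀ j, l ≤ j → a j = 0}, f a =
      ∑ p ∈ Fintype.piFinset (fun j : Fin l => s j), f (Function.extend Fin.val p 0) := by
  have hinj : Function.Injective fun p : Fin l → α => Function.extend Fin.val p 0 :=
    fun p p' h => funext fun j => by
      simpa only [Fin.val_injective.extend_apply] using congrFun h j
  have hset : {a : ℕ → α | (∀ j < l, P j (a j)) ∧ ∀ j, l ≤ j → a j = 0} =
      (fun p => Function.extend Fin.val p 0) ''
        (Fintype.piFinset fun j : Fin l => s j : Set (Fin l → α)) := by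
    ext a
    simp only [Set.mem_ofPred_eq, Set.mem_image, mem_coe, Fintype.mem_piFinset, hs]
    constructor
    · rintro ⟨hP, hzero⟩
      refine ⟨fun j => a j, fun j => hP j j.isLt, funext fun j => ?_⟩
      rw [Fin.extend_val_zero_apply]
      split_ifs with h
      · rfl
      · exact (hzero j (not_lt.1 h)).symm
    · rintro ⟨p, hp, rfl⟩
      refine ⟨fun j hj => ?_, fun j hj => ?_⟩ <;> rw [Fin.extend_val_zero_apply]
      · rw [dif_pos hj]
        exact hp ⟨j, hj⟩
      · rw [dif_neg (not_lt.2 hj)]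
  rw [hset, finsum_mem_image hinj.injOn, finsum_mem_coe_finset]

def strictAntiTuples (r B : ℕ) : Finset (Fin r → ℕ) :=
  {x ∈ Fintype.piFinset fun _ => range B | StrictAnti x}

theorem mem_strictAntiTuples {r B : ℕ} {x : Fin r → ℕ} :
    x ∈ strictAntiTuples r B ↔ StrictAnti x ∧ ∀ j, x j < B := by
  simp [strictAntiTuples, and_comm]

theorem finsum_strictAnti_prod_eq_sum {R : Type*} [CommSemiring R] {r : ℕ} (B : ℕ)
    (f : Fin r → ℕ → R) (hf : ∀ j i, B ≤ i → f j i = 0) :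
    ∑ᶠ x ∈ {x : Fin r → ℕ | StrictAnti x}, ∏ j, f j (x j) =
      ∑ x ∈ strictAntiTuples r B, ∏ j, f j (x j) := by
  refine finsum_mem_eq_sum_of_subset _ ?_ fun x hx => (mem_strictAntiTuples.1 hx).1
  rintro x ⟨hx, hne⟩
  refine mem_strictAntiTuples.2 ⟨hx, fun j => ?_⟩
  by_contra! hj
  exact hne (prod_eq_zero (mem_univ j) (hf j _ hj))

theorem sum_strictAntiTuples_filter_card_eq_sum_append {M : Type*} [AddCommMonoid M]
    (l k d B : ℕ) (φ : (Fin (l + k) → ℕ) → M) :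
    ∑ x ∈ strictAntiTuples (l + k) (B + d) with #{j | d ≤ x j} = l, φ x =
      ∑ x ∈ strictAntiTuples l B, ∑ y ∈ strictAntiTuples k d,
        φ (Fin.append (x · + d) y) := by
  rw [← sum_product']
  have hsplit {x : Fin (l + k) → ℕ}
      (hx : x ∈ strictAntiTuples (l + k) (B + d) ∧ #{j | d ≤ x j} = l) :
      (∀ j, d ≤ x (Fin.castAdd k j)) ∧ ∀ j, x (Fin.natAdd l j) < d :=
    ((mem_strictAntiTuples.1 hx.1).1.antitone.card_filter_le_eq_iff d).1 hx.2
  have hinv {x : Fin (l + k) → ℕ}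
      (hx : x ∈ strictAntiTuples (l + k) (B + d) ∧ #{j | d ≤ x j} = l) :
      Fin.append (fun j => x (Fin.castAdd k j) - d + d) (fun j => x (Fin.natAdd l j)) = x := by
    conv_rhs => rw [← Fin.append_castAdd_natAdd (f := x)]
    congr 1
    funext j
    have := (hsplit hx).1 j
    omega
  refine sum_nbij' (fun x => (fun j => x (Fin.castAdd k j) - d, fun j => x (Fin.natAdd l j)))
    (fun p => Fin.append (p.1 · + d) p.2) ?_ ?_ (fun x hx => hinv (mem_filter.1 hx)) ?_
    (fun x hx => by rw [hinv (mem_filter.1 hx)])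
  · intro x hx
    have hd := hsplit (mem_filter.1 hx)
    obtain ⟨hx, hxB⟩ := mem_strictAntiTuples.1 (mem_filter.1 hx).1
    simp only [mem_product, mem_strictAntiTuples]
    refine ⟨⟨fun a b hab => ?_, fun j => ?_⟩,
      hx.comp_strictMono (Fin.strictMono_natAdd l), hd.2⟩
    · have := hx (Fin.strictMono_castAdd k hab)
      have := hd.1 b
      dsimp only
      omega
    · have := hxB (Fin.castAdd k j)
      have := hd.1 j
      omega
  · rintro ⟨u, y⟩ hp
    simp only [mem_product, mem_strictAntiTuples] at hp
    obtain ⟨⟨hu, huB⟩, hy, hyd⟩ := hp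
    have happend : StrictAnti (Fin.append (u · + d) y) :=
      Fin.strictAnti_append (fun a b hab => Nat.add_lt_add_right (hu hab) d) hy
        fun i j => (hyd j).trans_le (Nat.le_add_left d _)
    refine mem_filter.2 ⟨mem_strictAntiTuples.2 ⟨happend, fun j => ?_⟩, ?_⟩
    · induction j using Fin.addCases
      · simp only [Fin.append_left]
        have := huB ‹_›
        omega
      · simp only [Fin.append_right]
        have := hyd ‹_›
        omega
    · exact (happend.antitone.card_filter_le_eq_iff d).2 ⟨by simp, by simpa using hyd⟩
  · rintro ⟨u, y⟩ -
    simp [Fin.append_left, Fin.append_right]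

section PowerSums

variable {F : Type*} [Field F] [Fintype F]

theorem powerSum_eq_sum (i m : ℕ) : powerSum F i m = ∑ n ∈ monicOfDegree F i, n ^ m := by
  have hset : {n : F[X] | n.Monic ∧ n.natDegree = i} = monicOfDegree F i := by ext; simp
  rw [powerSum, hset, finsum_mem_coe_finset]

theorem powerSumV_eq_sum (v : F[X]) [DecidablePred (v ∣ ·)] (i m : ℕ) :
    powerSumV F v i m = ∑ n ∈ monicOfDegree F i with ¬ v ∣ n, n ^ m := by
  have hset : {n : F[X] | n.Monic ∧ n.natDegree = i ∧ ¬ v ∣ n} =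
      ({n ∈ monicOfDegree F i | ¬ v ∣ n} : Finset F[X]) := by ext; simp [and_assoc]
  rw [powerSumV, hset, finsum_mem_coe_finset]

theorem zetaLtOne_eq_sum (d m : ℕ) : zetaLtOne F d m = ∑ i ∈ range d, powerSum F i m := by
  rw [zetaLtOne, ← finsum_mem_coe_finset, coe_range]
  rfl

theorem sum_degreeLTFinset_monic_pow [DecidablePred (Monic : F[X] → Prop)] (e k : ℕ) :
    ∑ n ∈ degreeLTFinset F e with n.Monic, n ^ k = zetaLtOne F e k := by
  rw [zetaLtOne_eq_sum, ← sum_fiberwise_of_maps_to (g := natDegree) (t := range e)]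
  · refine sum_congr rfl fun i hi => ?_
    rw [powerSum_eq_sum, filter_filter]
    congr 1
    ext n
    simp only [mem_filter, mem_degreeLTFinset, mem_monicOfDegree,
      and_iff_right_iff_imp]
    rintro ⟨hn, rfl⟩
    rw [degree_eq_natDegree hn.ne_zero]
    exact_mod_cast mem_range.1 hi
  · simp only [mem_filter, mem_degreeLTFinset, mem_range]
    rintro n ⟨hdeg, hn⟩
    exact (natDegree_lt_iff_degree_lt hn.ne_zero).2 hdeg

theorem sum_degreeLTFinset_ne_zero_pow [DecidableEq F[X]] (e k : ℕ) :
    ∑ h ∈ degreeLTFinset F e with h ≠ 0, h ^ k =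
      (if Fintype.card F - 1 ∣ k then -1 else 0) * zetaLtOne F e k := by
  classical
  have hnormalize (h : F[X]) (hh : h ≠ 0) :
      C h.leadingCoeff * (C h.leadingCoeff⁻¹ * h) = h := by
    rw [← mul_assoc, ← C_mul, mul_inv_cancel₀ (leadingCoeff_ne_zero.2 hh), C_1, one_mul]
  have hsplit : ∑ h ∈ degreeLTFinset F e with h ≠ 0, h ^ k =
      ∑ p ∈ (univ : Finset Fˣ) ×ˢ {n ∈ degreeLTFinset F e | n.Monic},
        (C (p.1 : F) * p.2) ^ k := by
    refine sum_bij' (fun h hh => (Units.mk0 _ (leadingCoeff_ne_zero.2 (mem_filter.1 hh).2),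
        C h.leadingCoeff⁻¹ * h)) (fun p _ => C (p.1 : F) * p.2) ?_ ?_ ?_ ?_ ?_
    · simp only [mem_filter, mem_degreeLTFinset, mem_product, mem_univ, true_and]
      rintro h ⟨hdeg, hh⟩
      refine ⟨?_, monic_C_mul_of_mul_leadingCoeff_eq_one
        (inv_mul_cancel₀ (leadingCoeff_ne_zero.2 hh))⟩
      rwa [degree_C_mul (inv_ne_zero (leadingCoeff_ne_zero.2 hh))]
    · simp only [mem_filter, mem_degreeLTFinset, mem_product, mem_univ, true_and]
      rintro ⟨c, n⟩ ⟨hdeg, hn⟩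
      exact ⟨by rwa [degree_C_mul c.ne_zero], mul_ne_zero (C_ne_zero.2 c.ne_zero) hn.ne_zero⟩
    · intro h hh
      exact hnormalize h (mem_filter.1 hh).2
    · simp only [mem_filter, mem_product, mem_univ, true_and]
      rintro ⟨c, n⟩ ⟨-, hn⟩
      have hlc : (C (c : F) * n).leadingCoeff = c := by simp [hn.leadingCoeff]
      ext1
      · exact Units.ext hlc
      · dsimp only
        rw [hlc, ← mul_assoc, ← C_mul, inv_mul_cancel₀ c.ne_zero, C_1, one_mul]
    · intro h hh
      exact congrArg (· ^ k) (hnormalize h (mem_filter.1 hh).2).symm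
  rw [hsplit, sum_product]
  simp_rw [mul_pow]
  rw [← sum_mul_sum, sum_degreeLTFinset_monic_pow]
  simp_rw [← C_pow, ← map_sum]
  rw [FiniteField.sum_pow_units]
  split_ifs <;> simp

theorem sum_monicOfDegree_sum_mul_add_pow (w : F[X]) (H : Finset F[X]) (i m : ℕ) :
    ∑ g ∈ monicOfDegree F i, ∑ h ∈ H, (w * g + h) ^ m =
      ∑ a ∈ range (m + 1),
        w ^ a * ((∑ h ∈ H, h ^ (m - a)) * m.choose a) * powerSum F i a := by
  simp only [add_pow, powerSum_eq_sum, sum_mul, mul_sum]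
  conv_rhs => rw [sum_comm]
  refine sum_congr rfl fun g _ => ?_
  conv_rhs => rw [sum_comm]
  refine sum_congr rfl fun h _ => sum_congr rfl fun a _ => ?_
  ring

theorem powerSum_eq_zero_of_lt {i m : ℕ} (h : m < i) : powerSum F i m = 0 := by
  induction i generalizing m with
  | zero => omega
  | succ i ih =>
    have hdecomp := sum_monicOfDegree_add_natDegree monic_X i (· ^ m : F[X] → F[X])
    rw [natDegree_X] at hdecomp
    rw [powerSum_eq_sum, hdecomp, sum_monicOfDegree_sum_mul_add_pow]
    refine sum_eq_zero fun a ha => ?_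
    rcases (mem_range_succ_iff.1 ha).lt_or_eq with ha | rfl
    · rw [ih (by omega), mul_zero]
    -- the `a = m` term carries the factor `∑_{deg h < 1} h ^ 0 = q = 0`
    · simp [card_degreeLTFinset, ← map_natCast C]

theorem powerSumV_eq_powerSum_of_lt (v : F[X]) {i : ℕ} (hi : i < v.natDegree) (m : ℕ) :
    powerSumV F v i m = powerSum F i m := by
  classical
  rw [powerSumV_eq_sum, powerSum_eq_sum, filter_true_of_mem]
  rintro n hn hdvd
  rw [mem_monicOfDegree] at hn
  exact (natDegree_le_of_dvd hdvd hn.1.ne_zero).not_gt (hn.2 ▸ hi)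

def congrExponents (q m : ℕ) : Finset ℕ := {a ∈ range (m + 1) | q - 1 ∣ m - a}

theorem mem_congrExponents {q m a : ℕ} :
    a ∈ congrExponents q m ↔ a ≤ m ∧ q - 1 ∣ m - a := by
  rw [congrExponents, mem_filter, mem_range_succ_iff]

theorem powerSumV_add_natDegree {v : F[X]} (hv : v.Monic) (i m : ℕ) :
    powerSumV F v (i + v.natDegree) m =
      -∑ a ∈ congrExponents (Fintype.card F) m,
        v ^ a * (zetaLtOne F v.natDegree (m - a) * m.choose a) * powerSum F i a := by
  classical
  have hdvd (g : F[X]) {h : F[X]} (hh : h ∈ degreeLTFinset F v.natDegree) :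
      v ∣ v * g + h ↔ h = 0 := by
    rw [dvd_add_right (dvd_mul_right v g)]
    refine ⟨fun hvh => eq_zero_of_dvd_of_degree_lt hvh ?_, fun h0 => h0 ▸ dvd_zero v⟩
    rwa [degree_eq_natDegree hv.ne_zero, ← mem_degreeLTFinset]
  calc powerSumV F v (i + v.natDegree) m
      = ∑ g ∈ monicOfDegree F i, ∑ h ∈ degreeLTFinset F v.natDegree with h ≠ 0,
          (v * g + h) ^ m := by
        rw [powerSumV_eq_sum, sum_filter, sum_monicOfDegree_add_natDegree hv]
        refine sum_congr rfl fun g _ => ?_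
        rw [sum_filter]
        exact sum_congr rfl fun h hh => by simp only [hdvd g hh]
    _ = ∑ a ∈ range (m + 1), v ^ a *
          (((if Fintype.card F - 1 ∣ m - a then -1 else 0) * zetaLtOne F v.natDegree (m - a)) *
            m.choose a) * powerSum F i a := by
        simp only [sum_monicOfDegree_sum_mul_add_pow, sum_degreeLTFinset_ne_zero_pow]
    _ = _ := by
        rw [congrExponents, sum_filter, ← sum_neg_distrib]
        refine sum_congr rfl fun a _ => ?_
        split_ifs <;> ring

theorem powerSumV_eq_zero_of_lt {v : F[X]} (hv : v.Monic) {i m : ℕ} (h : m + v.natDegree < i) :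
    powerSumV F v i m = 0 := by
  obtain ⟨j, rfl⟩ := Nat.exists_eq_add_of_le (show v.natDegree ≤ i by omega)
  rw [add_comm, powerSumV_add_natDegree hv, neg_eq_zero]
  refine sum_eq_zero fun a ha => ?_
  rw [powerSum_eq_zero_of_lt (by have := (mem_congrExponents.1 ha).1; omega), mul_zero]

theorem zetaInf_eq_sum (l : ℕ) (a : ℕ → ℕ) {B : ℕ} (hB : ∀ j < l, a j < B) :
    zetaInf F l a = ∑ x ∈ strictAntiTuples l B, ∏ j : Fin l, powerSum F (x j) (a j) :=
  finsum_strictAnti_prod_eq_sum B _ fun j _ hi =>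
    powerSum_eq_zero_of_lt ((hB j j.isLt).trans_le hi)

theorem zetaV_eq_sum {v : F[X]} (hv : v.Monic) (r : ℕ) (m : ℕ → ℕ) {B : ℕ}
    (hB : ∀ j < r, m j + v.natDegree < B) :
    zetaV F v r m = ∑ x ∈ strictAntiTuples r B, ∏ j : Fin r, powerSumV F v (x j) (m j) :=
  finsum_strictAnti_prod_eq_sum B _ fun j _ hi =>
    powerSumV_eq_zero_of_lt hv ((hB j j.isLt).trans_le hi)

theorem zetaLt_eq_sum (d k : ℕ) (m : ℕ → ℕ) :
    zetaLt F d k m = ∑ x ∈ strictAntiTuples k d, ∏ j : Fin k, powerSum F (x j) (m j) := by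
  have hset : {x : Fin k → ℕ | StrictAnti x ∧ ∀ j, x j < d} = strictAntiTuples k d := by
    ext; simp [mem_strictAntiTuples]
  rw [zetaLt, hset, finsum_mem_coe_finset]

theorem sum_prod_powerSumV_add_natDegree {v : F[X]} (hv : v.Monic) (l M : ℕ) (m : ℕ → ℕ)
    (hm : ∀ j < l, m j ≤ M) :
    ∑ x ∈ strictAntiTuples l (M + 1), ∏ j : Fin l, powerSumV F v (x j + v.natDegree) (m j) =
      (-1) ^ l * ∑ᶠ a ∈ {a : ℕ → ℕ |
          (∀ j < l, a j ≤ m j ∧ (Fintype.card F - 1) ∣ (m j - a j)) ∧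
            ∀ j, l ≤ j → a j = 0},
        v ^ (∑ j ∈ range l, a j) *
          (∏ j ∈ range l, zetaLtOne F v.natDegree (m j - a j) * ((m j).choose (a j) : F[X])) *
          zetaInf F l a := by
  rw [finsum_eq_sum_piFinset_extend fun _ _ => mem_congrExponents]
  calc ∑ x ∈ strictAntiTuples l (M + 1), ∏ j : Fin l, powerSumV F v (x j + v.natDegree) (m j)
      = ∑ x ∈ strictAntiTuples l (M + 1), (-1) ^ l *
          ∑ p ∈ Fintype.piFinset fun j : Fin l => congrExponents (Fintype.card F) (m j),
          ∏ j : Fin l, v ^ p j * (zetaLtOne F v.natDegree (m j - p j) * (m j).choose (p j)) *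
            powerSum F (x j) (p j) := by
        refine sum_congr rfl fun x _ => ?_
        simp only [powerSumV_add_natDegree hv, prod_neg, card_univ, Fintype.card_fin,
          prod_univ_sum]
    _ = (-1) ^ l *
          ∑ p ∈ Fintype.piFinset fun j : Fin l => congrExponents (Fintype.card F) (m j),
          v ^ (∑ j : Fin l, p j) *
          (∏ j : Fin l, zetaLtOne F v.natDegree (m j - p j) * (m j).choose (p j)) *
          ∑ x ∈ strictAntiTuples l (M + 1), ∏ j : Fin l, powerSum F (x j) (p j) := by
        simp_rw [← mul_sum, mul_sum, prod_mul_distrib, prod_pow_eq_pow_sum]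
        rw [sum_comm]
    _ = _ := by
        congr 1
        refine sum_congr rfl fun p hp => ?_
        simp only [← Fin.sum_univ_eq_sum_range, ← Fin.prod_univ_eq_prod_range,
          Fin.val_injective.extend_apply]
        rw [zetaInf_eq_sum l _ (B := M + 1)]
        · simp only [Fin.val_injective.extend_apply]
        · intro j hj
          rw [Fin.extend_val_zero_apply, dif_pos hj]
          exact Nat.lt_succ_of_le
            ((mem_congrExponents.1 (Fintype.mem_piFinset.1 hp ⟨j, hj⟩)).1.trans (hm j hj))

end PowerSums

/-- Indices start at `0`: `m j` and `a j` stand for `m_{j+1}` and `a_{j+1}`, and the tuple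
`(a_1, …, a_l)` is encoded as a function `a : ℕ → ℕ` vanishing from index `l` on. -/
theorem zetaV_eq_sum_zetaInf_general (F : Type*) [Field F] [Fintype F] (v : Polynomial F)
    (hv : v.Monic) (r : ℕ) (m : ℕ → ℕ) :
    zetaV F v r m =
      ∑ l ∈ Finset.range (r + 1),
        (-1 : Polynomial F) ^ l * zetaLt F v.natDegree (r - l) (fun j => m (l + j)) *
          ∑ᶠ a ∈ {a : ℕ → ℕ |
              (∀ j < l, a j ≤ m j ∧ (Fintype.card F - 1) ∣ (m j - a j)) ∧
                ∀ j, l ≤ j → a j = 0},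
            v ^ (∑ j ∈ Finset.range l, a j) *
              (∏ j ∈ Finset.range l,
                zetaLtOne F v.natDegree (m j - a j) * (Nat.choose (m j) (a j) : Polynomial F)) *
              zetaInf F l a := by
  classical
  obtain ⟨M, hM⟩ : ∃ M, ∀ j < r, m j ≤ M :=
    ⟨∑ j ∈ range r, m j, fun j hj =>
      single_le_sum (fun _ _ => Nat.zero_le _) (mem_range.2 hj)⟩
  rw [zetaV_eq_sum hv r m (B := M + 1 + v.natDegree) fun j hj => by have := hM j hj; omega,
    ← sum_fiberwise_of_maps_to (g := fun x => #{j | v.natDegree ≤ x j}) (t := range (r + 1))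
      fun x _ => mem_range_succ_iff.2 ((card_le_univ _).trans_eq (Fintype.card_fin r))]
  refine sum_congr rfl fun l hl => ?_
  obtain ⟨k, rfl⟩ := Nat.exists_eq_add_of_le (mem_range_succ_iff.1 hl)
  rw [sum_strictAntiTuples_filter_card_eq_sum_append, Nat.add_sub_cancel_left, zetaLt_eq_sum]
  simp only [Fin.prod_univ_add, Fin.append_left, Fin.append_right, Fin.val_castAdd,
    Fin.val_natAdd]
  calc _ = ∑ x ∈ strictAntiTuples l (M + 1), ∑ y ∈ strictAntiTuples k v.natDegree,
        (∏ j : Fin l, powerSumV F v (x j + v.natDegree) (m j)) *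
          ∏ j : Fin k, powerSum F (y j) (m (l + j)) :=
        sum_congr rfl fun x _ => sum_congr rfl fun y hy => congrArg _ <| prod_congr rfl
          fun j _ => powerSumV_eq_powerSum_of_lt v ((mem_strictAntiTuples.1 hy).2 j) _
    _ = _ := by
        rw [← sum_mul_sum, sum_prod_powerSumV_add_natDegree hv l M m fun j hj => hM j (by omega)]
        ring

/-- Formula for v-adic multiple zeta values at negative integers in terms of ∞-adic ones.
The inner sum runs over tuples `(a_1, …, a_l)` (encoded as functions `a : ℕ → ℕ`
vanishing from index `l` on) with `0 ≤ a_j ≤ m_j` and `(q-1) ∣ (m_j - a_j)`. -/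
theorem zetaV_eq_sum_zetaInf (F : Type*) [Field F] [Fintype F] (v : Polynomial F)
    (hv : v.Monic) (hvirr : Irreducible v) (hd : 0 < v.natDegree) (r : ℕ) (hr : 1 ≤ r)
    (m : ℕ → ℕ) :
    zetaV F v r m =
      ∑ l ∈ Finset.range (r + 1),
        (-1 : Polynomial F) ^ l * zetaLt F v.natDegree (r - l) (fun j => m (l + j)) *
          ∑ᶠ a ∈ {a : ℕ → ℕ |
              (∀ j < l, a j ≤ m j ∧ (Fintype.card F - 1) ∣ (m j - a j)) ∧
                ∀ j, l ≤ j → a j = 0},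
            v ^ (∑ j ∈ Finset.range l, a j) *
              (∏ j ∈ Finset.range l,
                zetaLtOne F v.natDegree (m j - a j) * (Nat.choose (m j) (a j) : Polynomial F)) *
              zetaInf F l a :=
  zetaV_eq_sum_zetaInf_general F v hv r m
end

section
/- (∞-adic valuation estimate for power sums; Proposition on ord_∞ of S_i(t), case of integer exponents.) For all integers i ≥ 0 and m ≥ 0, the polynomial Σ_{n ∈ A₊, deg n = i} (rev_i n)^m ∈ 𝔽_q[X] is divisible by X^{i(i+1)/2}, where for a monic n ∈ A of degree i, rev_i n ∈ 𝔽_q[X] denotes the reversal X^i · n(1/X) (the polynomial whose coefficient sequence is that of n in reverse order, so that rev_i n has constant coefficient 1). Equivalently, the 1/θ-adic valuation of Σ_{n ∈ A₊, deg n = i} (θ^{−i} n)^m is at least i(i+1)/2. -/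
open Polynomial

section AuxOrdInf
set_option linter.unusedSectionVars false
open Finset
variable {F : Type*} [Field F] [Fintype F]

lemma aux_card : ((Fintype.card F : Polynomial F)) = 0 := by
  rw [← map_natCast (C : F →+* Polynomial F), FiniteField.cast_card_eq_zero, map_zero]

lemma aux_B (Q : Polynomial F) (t m : ℕ) :
    ∑ a : F, (Q + C a * X ^ t) ^ m
      = ∑ j ∈ Finset.range m,
          Q ^ j * C (∑ a : F, a ^ (m - j)) * X ^ (t * (m - j)) * (m.choose j : Polynomial F) := by
  have h : ∀ a : F, (Q + C a * X ^ t) ^ m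
      = ∑ j ∈ Finset.range (m + 1),
          Q ^ j * C (a ^ (m - j)) * X ^ (t * (m - j)) * (m.choose j : Polynomial F) := by
    intro a
    rw [add_pow]
    refine Finset.sum_congr rfl fun j hj => ?_
    rw [mul_pow, ← C_pow, ← pow_mul]
    ring
  rw [Finset.sum_congr rfl fun a _ => h a, Finset.sum_comm]
  rw [Finset.sum_range_succ]
  have hz : (∑ a : F, Q ^ m * C (a ^ (m - m)) * X ^ (t * (m - m)) * (m.choose m : Polynomial F)) = 0 := by
    simp [Finset.sum_const, card_univ, aux_card]
  rw [hz, add_zero]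
  refine Finset.sum_congr rfl fun j hj => ?_
  rw [← Finset.sum_mul, ← Finset.sum_mul, ← Finset.mul_sum, ← map_sum]

lemma aux_main (i : ℕ) (e : Fin i → ℕ) (P : Polynomial F) (m : ℕ) :
    X ^ (∑ k, e k) ∣ ∑ c : Fin i → F, (P + ∑ k, C (c k) * X ^ (e k)) ^ m := by
  induction i generalizing P m with
  | zero => simp
  | succ i ih =>
    -- reindex by cons
    rw [← Equiv.sum_comp (Fin.consEquiv (fun _ : Fin (i+1) => F)) fun c => (P + ∑ k, C (c k) * X ^ (e k)) ^ m]
    rw [Fintype.sum_prod_type, Finset.sum_comm]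
    have key : ∀ c : Fin i → F, ∀ a : F,
        (P + ∑ k : Fin (i+1), C ((Fin.consEquiv (fun _ : Fin (i+1) => F)) (a, c) k) * X ^ (e k))
          = (P + ∑ k : Fin i, C (c k) * X ^ (e k.succ)) + C a * X ^ (e 0) := by
      intro c a
      rw [Fin.sum_univ_succ]
      simp [Fin.consEquiv]
      ring
    simp_rw [key, aux_B]
    rw [Finset.sum_comm]
    refine Finset.dvd_sum fun j hj => ?_
    simp_rw [mul_assoc]
    rw [← Finset.sum_mul]
    rw [Fin.sum_univ_succ, add_comm (e 0), pow_add]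
    refine mul_dvd_mul (ih _ P j) ?_
    refine Dvd.dvd.mul_left ?_ _
    refine dvd_mul_of_dvd_left ?_ _
    exact pow_dvd_pow X (Nat.le_mul_of_pos_right _ (by simp at hj; omega))

noncomputable def phiAux {F : Type*} [Field F] (i : ℕ) (c : Fin i → F) : Polynomial F :=
  X ^ i + ∑ k, C (c k) * X ^ (k : ℕ)

lemma coeff_sum_aux {i : ℕ} (c : Fin i → F) (j : ℕ) :
    (∑ k : Fin i, C (c k) * X ^ (k : ℕ)).coeff j = if h : j < i then c ⟨j, h⟩ else 0 := by
  rw [finset_sum_coeff]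
  simp_rw [coeff_C_mul, coeff_X_pow, mul_ite, mul_one, mul_zero]
  split_ifs with h
  · rw [Finset.sum_eq_single (⟨j, h⟩ : Fin i)]
    · simp
    · intro b _ hb
      have hb' := b.isLt
      have : j ≠ (b : ℕ) := by simp [Fin.ext_iff] at hb; omega
      simp [this]
    · simp
  · apply Finset.sum_eq_zero
    intro b _
    have hb' := b.isLt
    have : j ≠ (b : ℕ) := by omega
    simp [this]

lemma phiAux_coeff {i : ℕ} (c : Fin i → F) (j : ℕ) :
    (phiAux i c).coeff j = (if j = i then 1 else 0) + (if h : j < i then c ⟨j, h⟩ else 0) := by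
  rw [phiAux, coeff_add, coeff_X_pow, coeff_sum_aux]

lemma phiAux_inj {i : ℕ} : Function.Injective (phiAux (F := F) i) := by
  intro c c' h
  funext k
  have := congrArg (fun p => Polynomial.coeff p (k : ℕ)) h
  simp only [phiAux_coeff] at this
  rw [dif_pos k.isLt, dif_pos k.isLt] at this
  have hne : (k : ℕ) ≠ i := by omega
  simpa [hne] using this

lemma phiAux_range {i : ℕ} :
    Set.range (phiAux (F := F) i) = {n : Polynomial F | n.Monic ∧ n.natDegree = i} := by
  ext n
  constructor
  · rintro ⟨c, rfl⟩
    have hdeg : (∑ k : Fin i, C (c k) * X ^ (k : ℕ)).degree < (i : WithBot ℕ) := by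
      refine lt_of_le_of_lt (degree_sum_le _ _) ?_
      rw [Finset.sup_lt_iff (by exact_mod_cast WithBot.bot_lt_coe i)]
      intro k _
      exact lt_of_le_of_lt (degree_C_mul_X_pow_le _ _) (by exact_mod_cast k.isLt)
    have hmono : (phiAux i c).Monic := monic_X_pow_add hdeg
    refine ⟨hmono, ?_⟩
    have hd : (phiAux i c).degree = (i : WithBot ℕ) := by
      rw [phiAux, degree_add_eq_left_of_degree_lt (by rwa [degree_X_pow]), degree_X_pow]
    exact natDegree_eq_of_degree_eq_some hd
  · rintro ⟨hmon, hdeg⟩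
    refine ⟨fun k => n.coeff (k : ℕ), ?_⟩
    ext j
    rw [phiAux_coeff]
    rcases lt_trichotomy j i with h | h | h
    · simp [h, Nat.ne_of_lt h]
    · subst h
      simp [← hdeg, hmon.coeff_natDegree]
    · have h1 : n.coeff j = 0 := coeff_eq_zero_of_natDegree_lt (by omega)
      simp [Nat.ne_of_gt h, h1, (show ¬ j < i by omega)]

lemma reflect_phiAux {i : ℕ} (c : Fin i → F) :
    reflect i (phiAux i c) = 1 + ∑ k : Fin i, C (c k) * X ^ (i - (k : ℕ)) := by
  rw [phiAux, reflect_add, reflect_monomial, revAt_le (le_refl i), Nat.sub_self, pow_zero]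
  congr 1
  rw [show (reflect i : Polynomial F → Polynomial F)
      = ⇑(AddMonoidHom.mk' (reflect i) (fun f g => reflect_add f g i)) from rfl, map_sum]
  refine Finset.sum_congr rfl fun k _ => ?_
  rw [AddMonoidHom.mk'_apply, reflect_C_mul_X_pow, revAt_le (le_of_lt k.isLt)]

lemma gauss_aux (i : ℕ) : ∑ k : Fin i, (i - (k : ℕ)) = i * (i + 1) / 2 := by
  rw [Fin.sum_univ_eq_sum_range]
  induction i with
  | zero => simp
  | succ i ih =>
    have e1 : ∑ k ∈ Finset.range i, (i + 1 - k) = ∑ k ∈ Finset.range i, ((i - k) + 1) :=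
      Finset.sum_congr rfl fun k hk => by have := Finset.mem_range.mp hk; omega
    rw [Finset.sum_range_succ, e1, Finset.sum_add_distrib, ih]
    simp only [Finset.sum_const, Finset.card_range, smul_eq_mul, mul_one]
    have h2 : 2 ∣ i * (i + 1) := Nat.even_mul_succ_self i |>.two_dvd
    have h3 : 2 ∣ (i + 1) * (i + 1 + 1) := Nat.even_mul_succ_self (i+1) |>.two_dvd
    have hA : (i + 1) * (i + 1 + 1) = i * (i + 1) + 2 * (i + 1) := by ring
    omega

end AuxOrdInf

/-- ∞-adic valuation estimate for power sums (integer exponents): the sum over monic `n`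
of degree `i` of `(rev_i n)^m` is divisible by `X^{i(i+1)/2}`, where `rev_i n` is the
reversal `X^i · n(1/X)` (i.e. `Polynomial.reflect i n`), encoding the expansion of
`θ^{-i} n` in the variable `X = 1/θ`. -/
theorem ord_inf_powerSum (F : Type*) [Field F] [Fintype F] (i m : ℕ) :
    (X : Polynomial F) ^ (i * (i + 1) / 2) ∣
      ∑ᶠ n ∈ {n : Polynomial F | n.Monic ∧ n.natDegree = i},
        (Polynomial.reflect i n) ^ m := by
  rw [← phiAux_range (F := F) (i := i)]
  rw [finsum_mem_range phiAux_inj]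
  rw [finsum_eq_sum_of_fintype]
  simp_rw [reflect_phiAux]
  have h := aux_main (F := F) i (fun k => i - (k : ℕ)) 1 m
  rwa [gauss_aux] at h
end
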